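/- Let N ≥ 3, let k ≥ 2 be an integer, r > 0 and h ∈ (0,1). Suppose y = (y₁, y₂, y₃, …, y_N) ∈ ℝ^N satisfies y₁ ≥ √(y₁² + y₂²) · cos(π/k) and y₃ ≥ 0. Then for every j = 1, …, k one has |y − x̄_1| ≤ |y − x̄_j|, |y − x̄_j| ≤ |y − x̲_j|, and in particular |y − x̄_1| ≤ |y − x̲_j|. -/

import Mathlib

/-- The upper points `x̄_j = r(√(1−h²)cos(2(j−1)π/k), √(1−h²)sin(2(j−1)π/k), h, 0, …, 0)`. -/
noncomputable def xbar (N k : ℕ) (r h : ℝ) (j : ℕ) : EuclideanSpace ℝ (Fin N) :=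
  (EuclideanSpace.equiv (Fin N) ℝ).symm fun i =>
    if (i : ℕ) = 0 then r * Real.sqrt (1 - h ^ 2) * Real.cos (2 * ((j : ℝ) - 1) * Real.pi / k)
    else if (i : ℕ) = 1 then r * Real.sqrt (1 - h ^ 2) * Real.sin (2 * ((j : ℝ) - 1) * Real.pi / k)
    else if (i : ℕ) = 2 then r * h
    else 0

/-- The lower points `x̲_j = r(√(1−h²)cos(2(j−1)π/k), √(1−h²)sin(2(j−1)π/k), −h, 0, …, 0)`. -/
noncomputable def xunder (N k : ℕ) (r h : ℝ) (j : ℕ) : EuclideanSpace ℝ (Fin N) :=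
  (EuclideanSpace.equiv (Fin N) ℝ).symm fun i =>
    if (i : ℕ) = 0 then r * Real.sqrt (1 - h ^ 2) * Real.cos (2 * ((j : ℝ) - 1) * Real.pi / k)
    else if (i : ℕ) = 1 then r * Real.sqrt (1 - h ^ 2) * Real.sin (2 * ((j : ℝ) - 1) * Real.pi / k)
    else if (i : ℕ) = 2 then -(r * h)
    else 0

/-!
All the `x̄_j` have the same height `r h` and lie on a circle around the `y₃`-axis, so
`|y - x̄_1| ≤ |y - x̄_j|` reduces to the planar inequality `y₁ cos θ_j + y₂ sin θ_j ≤ y₁` with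
`θ_j = 2(j-1)π/k`; in polar coordinates this says that the angle of `(y₁, y₂)`, which is at most
`π/k` in absolute value, is closer to `0` than to `θ_j` modulo `2π`. Reflecting `x̄_j` to `x̲_j` only
flips the sign of the third coordinate, which cannot bring it closer to `y` since `y₃ ≥ 0`.
-/

open Real

theorem abs_arg_le_of_norm_mul_cos_le_re {z : ℂ} {α : ℝ} (hα₀ : 0 ≤ α) (hα : α ≤ π)
    (hz : ‖z‖ * cos α ≤ z.re) : |z.arg| ≤ α := by
  rcases eq_or_ne z 0 with rfl | hz₀
  · simpa using hα₀
  have hcos : cos α ≤ cos |z.arg| := by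
    rw [cos_abs, Complex.cos_arg hz₀, le_div_iff₀ (norm_pos_iff.mpr hz₀), mul_comm]
    exact hz
  exact (strictAntiOn_cos.le_iff_ge ⟨hα₀, hα⟩ ⟨abs_nonneg _, Complex.abs_arg_le_pi z⟩).mp hcos

theorem Real.cos_le_cos_of_le_of_le_two_pi_sub {α x : ℝ} (hα : 0 ≤ α) (hx₁ : α ≤ x)
    (hx₂ : x ≤ 2 * π - α) : cos x ≤ cos α := by
  rcases le_or_gt x π with hx | hx
  · exact cos_le_cos_of_nonneg_of_le_pi hα hx hx₁
  · rw [← cos_two_pi_sub x]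
    exact cos_le_cos_of_nonneg_of_le_pi hα (by linarith) (by linarith)

theorem mul_cos_add_mul_sin_le_of_sector {y₁ y₂ α θ : ℝ} (hα : 0 ≤ α) (hθ₁ : 2 * α ≤ θ)
    (hθ₂ : θ ≤ 2 * π - 2 * α) (hy : √(y₁ ^ 2 + y₂ ^ 2) * cos α ≤ y₁) :
    y₁ * cos θ + y₂ * sin θ ≤ y₁ := by
  set z : ℂ := ⟨y₁, y₂⟩
  have hnorm : ‖z‖ = √(y₁ ^ 2 + y₂ ^ 2) := Complex.norm_eq_sqrt_sq_add_sq z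
  have hφ : |z.arg| ≤ α :=
    abs_arg_le_of_norm_mul_cos_le_re hα (by linarith [pi_pos]) (hnorm ▸ hy)
  have hcos : cos (θ - z.arg) ≤ cos α :=
    cos_le_cos_of_le_of_le_two_pi_sub hα (by linarith [(abs_le.mp hφ).2])
      (by linarith [(abs_le.mp hφ).1])
  calc y₁ * cos θ + y₂ * sin θ
      = ‖z‖ * cos z.arg * cos θ + ‖z‖ * sin z.arg * sin θ := by
        rw [Complex.norm_mul_cos_arg, Complex.norm_mul_sin_arg]
    _ = ‖z‖ * cos (θ - z.arg) := by rw [cos_sub]; ring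
    _ ≤ ‖z‖ * cos α := mul_le_mul_of_nonneg_left hcos (norm_nonneg z)
    _ ≤ y₁ := hnorm ▸ hy

theorem mul_cos_add_mul_sin_le_of_mem_sector {k j : ℕ} (hj₁ : 1 ≤ j) (hjk : j ≤ k)
    {y₁ y₂ : ℝ} (hy : √(y₁ ^ 2 + y₂ ^ 2) * cos (π / k) ≤ y₁) :
    y₁ * cos (2 * ((j : ℝ) - 1) * π / k) + y₂ * sin (2 * ((j : ℝ) - 1) * π / k) ≤ y₁ := by
  rcases hj₁.eq_or_lt with rfl | hj₂
  · simp
  have hj₂' : (2 : ℝ) ≤ j := by exact_mod_cast hj₂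
  have hjk' : (j : ℝ) ≤ k := by exact_mod_cast hjk
  have hk : (0 : ℝ) < k := by linarith
  have hα : 0 < π / k := by positivity
  have hkα : (k : ℝ) * (π / k) = π := mul_div_cancel₀ π hk.ne'
  rw [mul_div_assoc]
  exact mul_cos_add_mul_sin_le_of_sector hα.le (by nlinarith) (by nlinarith) hy

noncomputable def vec3 (N : ℕ) (a b c : ℝ) : EuclideanSpace ℝ (Fin N) :=
  (EuclideanSpace.equiv (Fin N) ℝ).symm fun i =>
    if (i : ℕ) = 0 then a else if (i : ℕ) = 1 then b else if (i : ℕ) = 2 then c else 0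

theorem norm_sub_vec3_sq {n : ℕ} (y : EuclideanSpace ℝ (Fin (n + 3))) (a b c : ℝ) :
    ‖y - vec3 (n + 3) a b c‖ ^ 2 =
      (y 0 - a) ^ 2 + (y 1 - b) ^ 2 + (y 2 - c) ^ 2 + ∑ i : Fin n, y i.succ.succ.succ ^ 2 := by
  simp [EuclideanSpace.norm_sq_eq, Fin.sum_univ_succ, vec3, add_assoc]

theorem norm_sub_vec3_le_norm_sub_vec3 {n : ℕ} (y : EuclideanSpace ℝ (Fin (n + 3)))
    {a b c a' b' c' : ℝ}
    (h : (y 0 - a) ^ 2 + (y 1 - b) ^ 2 + (y 2 - c) ^ 2 ≤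
      (y 0 - a') ^ 2 + (y 1 - b') ^ 2 + (y 2 - c') ^ 2) :
    ‖y - vec3 (n + 3) a b c‖ ≤ ‖y - vec3 (n + 3) a' b' c'‖ := by
  rw [← sq_le_sq₀ (norm_nonneg _) (norm_nonneg _), norm_sub_vec3_sq, norm_sub_vec3_sq]
  linarith

theorem xbar_eq_vec3 (N k : ℕ) (r h : ℝ) (j : ℕ) :
    xbar N k r h j = vec3 N (r * √(1 - h ^ 2) * cos (2 * ((j : ℝ) - 1) * π / k))
      (r * √(1 - h ^ 2) * sin (2 * ((j : ℝ) - 1) * π / k)) (r * h) := rfl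

theorem xunder_eq_vec3 (N k : ℕ) (r h : ℝ) (j : ℕ) :
    xunder N k r h j = vec3 N (r * √(1 - h ^ 2) * cos (2 * ((j : ℝ) - 1) * π / k))
      (r * √(1 - h ^ 2) * sin (2 * ((j : ℝ) - 1) * π / k)) (-(r * h)) := rfl

theorem stmt_12 (N k : ℕ) (hN : 3 ≤ N) (r h : ℝ) (hr : 0 < r)
    (hh : h ∈ Set.Ioo (0 : ℝ) 1) (y : EuclideanSpace ℝ (Fin N))
    (hy1 : Real.sqrt ((y ⟨0, by omega⟩) ^ 2 + (y ⟨1, by omega⟩) ^ 2) *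
        Real.cos (Real.pi / k) ≤ y ⟨0, by omega⟩)
    (hy3 : 0 ≤ y ⟨2, by omega⟩) :
    ∀ j : ℕ, 1 ≤ j → j ≤ k →
      ‖y - xbar N k r h 1‖ ≤ ‖y - xbar N k r h j‖ ∧
      ‖y - xbar N k r h j‖ ≤ ‖y - xunder N k r h j‖ ∧
      ‖y - xbar N k r h 1‖ ≤ ‖y - xunder N k r h j‖ := by
  intro j hj₁ hjk
  obtain ⟨n, rfl⟩ : ∃ n, N = n + 3 := ⟨N - 3, by omega⟩
  change √(y 0 ^ 2 + y 1 ^ 2) * cos (π / k) ≤ y 0 at hy1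
  change 0 ≤ y 2 at hy3
  have hangle := mul_cos_add_mul_sin_le_of_mem_sector hj₁ hjk hy1
  set θ := 2 * ((j : ℝ) - 1) * π / k
  set ρ := r * √(1 - h ^ 2)
  have hρ : 0 ≤ ρ := by positivity
  have hcircle : (ρ * cos θ) ^ 2 + (ρ * sin θ) ^ 2 = ρ ^ 2 := by
    linear_combination ρ ^ 2 * cos_sq_add_sin_sq θ
  have hupper : ‖y - xbar (n + 3) k r h 1‖ ≤ ‖y - xbar (n + 3) k r h j‖ := by
    rw [xbar_eq_vec3, xbar_eq_vec3]
    apply norm_sub_vec3_le_norm_sub_vec3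
    simp only [Nat.cast_one, sub_self, mul_zero, zero_mul, zero_div, cos_zero, sin_zero, mul_one]
    linarith [mul_nonneg hρ (sub_nonneg.mpr hangle)]
  have hreflect : ‖y - xbar (n + 3) k r h j‖ ≤ ‖y - xunder (n + 3) k r h j‖ := by
    rw [xbar_eq_vec3, xunder_eq_vec3]
    apply norm_sub_vec3_le_norm_sub_vec3
    linarith [mul_nonneg (mul_nonneg hr.le hh.1.le) hy3]
  exact ⟨hupper, hreflect, hupper.trans hreflect⟩
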